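/- Let D be a connected finite graph and H a nested set on D that is maximal with respect to inclusion among nested sets. Then for every B in H one has n(B;H) = 1, i.e. exactly one vertex of B does not lie in the union of the maximal elements of H properly contained in B. Consequently, every maximal nested set on D has cardinality |V(D)|. -/

import Mathlib

open scoped Classical

section NestedSets

variable {V : Type*} [Fintype V] [DecidableEq V]

/-- The (induced subgraph on the) finite vertex set `B` is connected (in particular nonempty). -/
def Conn (G : SimpleGraph V) (B : Finset V) : Prop :=
  (G.induce (B : Set V)).Connected

/-- Two vertex sets are orthogonal: no edge of `G` joins a vertex of one to a vertex
of the other. -/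
def Orth (G : SimpleGraph V) (B C : Finset V) : Prop :=
  ∀ a ∈ B, ∀ b ∈ C, ¬ G.Adj a b

/-- Two subdiagrams are compatible if one contains the other or they are orthogonal. -/
def Compat (G : SimpleGraph V) (B C : Finset V) : Prop :=
  B ⊆ C ∨ C ⊆ B ∨ Orth G B C

/-- A nested set on the (connected) diagram `D` with vertex set `V`: a collection of
pairwise compatible connected subdiagrams containing `D` itself. -/
def Nested (G : SimpleGraph V) (H : Finset (Finset V)) : Prop :=
  Finset.univ ∈ H ∧ (∀ B ∈ H, Conn G B) ∧ ∀ B ∈ H, ∀ C ∈ H, Compat G B C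

/-- `iN H B` is the union of the elements of `H` strictly contained in `B`;
this coincides with the union of the *maximal* elements of `H` strictly contained in `B`. -/
noncomputable def iN (H : Finset (Finset V)) (B : Finset V) : Finset V :=
  (H.filter fun C => C ⊂ B).sup id

/-- `nN H B = n(B;H)` is the number of vertices of `B` not covered by the maximal
elements of `H` strictly contained in `B`. -/
noncomputable def nN (H : Finset (Finset V)) (B : Finset V) : ℕ :=
  (B \ iN H B).card

/-- `C` is a connected component of (the induced subgraph on) `S`. -/
def IsCC (G : SimpleGraph V) (S C : Finset V) : Prop :=
  C ⊆ S ∧ Conn G C ∧ ∀ C', C ⊆ C' → C' ⊆ S → Conn G C' → C' = C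

/-- A maximal nested set on `D`. -/
def MaxNested (G : SimpleGraph V) (F : Finset (Finset V)) : Prop :=
  Nested G F ∧ ∀ K, Nested G K → F ⊆ K → K = F

end NestedSets

/-!
The cores `B \ iN H B` of the members of a nested set `H` partition the vertices: each vertex
lies in the core of the smallest member containing it, and two members sharing a core vertex
would be nested one strictly inside the other. Cores are nonempty, since a connected `B`
cannot be covered by pairwise compatible proper members. If `H` is maximal and the core of
`B` contained two vertices `x ≠ y`, the connected component of `x` in `insert x (iN H B)`
would be a connected set compatible with all of `H` and not in `H`. So every core is a
singleton and `|H| = |V|`.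
-/

namespace Conn
variable {V : Type*} {G : SimpleGraph V}

lemma nonempty {B : Finset V} (h : Conn G B) : B.Nonempty := by
  obtain ⟨⟨v, hv⟩⟩ := SimpleGraph.Connected.nonempty h
  exact ⟨v, hv⟩

lemma singleton (v : V) : Conn G {v} := by
  rw [Conn, Finset.coe_singleton, SimpleGraph.induce_singleton_eq_top]
  exact SimpleGraph.connected_top

lemma union_of_adj [DecidableEq V] {B C : Finset V} (hB : Conn G B) (hC : Conn G C) {a b : V}
    (ha : a ∈ B) (hb : b ∈ C) (hab : G.Adj a b) : Conn G (B ∪ C) := by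
  rw [Conn, Finset.coe_union]
  exact SimpleGraph.connected_induce_union hB.preconnected hC.preconnected ha hb hab

lemma exists_adj_sdiff {B S : Finset V} (hB : Conn G B) {s t : V} (hsS : s ∈ S)
    (hsB : s ∈ B) (htB : t ∈ B) (htS : t ∉ S) :
    ∃ a ∈ S, ∃ b ∈ B, b ∉ S ∧ G.Adj a b := by
  obtain ⟨p⟩ := hB.preconnected ⟨s, hsB⟩ ⟨t, htB⟩
  obtain ⟨d, -, hd₁, hd₂⟩ := p.exists_boundary_dart {w | w.1 ∈ S} hsS htS
  exact ⟨d.fst, hd₁, d.snd, d.snd.2, hd₂, d.adj⟩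

lemma subset_of_orth {B C : Finset V} (hB : Conn G B) (hBC : Orth G B C) {v : V}
    (hvB : v ∈ B) (hvC : v ∈ C) : B ⊆ C := by
  by_contra hBC'
  obtain ⟨t, htB, htC⟩ := Finset.not_subset.mp hBC'
  obtain ⟨a, haC, b, hbB, -, hab⟩ := hB.exists_adj_sdiff hvC hvB htB htC
  exact hBC b hbB a haC hab.symm

end Conn

section Compat
variable {V : Type*} {G : SimpleGraph V} {B C : Finset V}

lemma Orth.symm (h : Orth G B C) : Orth G C B :=
  fun a ha b hb hab => h b hb a ha hab.symm

lemma Compat.symm (h : Compat G B C) : Compat G C B := by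
  rcases h with h | h | h
  exacts [Or.inr (Or.inl h), Or.inl h, Or.inr (Or.inr h.symm)]

lemma Compat.subset_or_subset (h : Compat G B C) (hB : Conn G B) {v : V} (hvB : v ∈ B)
    (hvC : v ∈ C) : B ⊆ C ∨ C ⊆ B := by
  rcases h with h | h | h
  exacts [Or.inl h, Or.inr h, Or.inl (hB.subset_of_orth h hvB hvC)]

end Compat

namespace IsCC
variable {V : Type*} [DecidableEq V] {G : SimpleGraph V} {S C : Finset V}

lemma exists_mem {x : V} (hx : x ∈ S) : ∃ C, IsCC G S C ∧ x ∈ C := by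
  obtain ⟨C, -, hC⟩ := (S.powerset.filter fun C => Conn G C ∧ x ∈ C).exists_le_maximal
    (a := {x}) (by simp [hx, Conn.singleton])
  simp only [Finset.mem_filter, Finset.mem_powerset] at hC
  obtain ⟨⟨hCS, hCconn, hxC⟩, hCmax⟩ := hC
  refine ⟨C, ⟨hCS, hCconn, fun C' hCC' hC'S hC' => ?_⟩, hxC⟩
  exact (hCmax ⟨hC'S, hC', hCC' hxC⟩ hCC').antisymm hCC'

lemma subset_of_adj (hC : IsCC G S C) {E : Finset V} (hE : Conn G E) (hES : E ⊆ S) {a b : V}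
    (haE : a ∈ E) (hbC : b ∈ C) (hab : G.Adj a b) : E ⊆ C := by
  have hEC := hC.2.2 (C ∪ E) Finset.subset_union_left (Finset.union_subset hC.1 hES)
    (Finset.union_comm C E ▸ hE.union_of_adj hC.2.1 haE hbC hab)
  exact hEC ▸ Finset.subset_union_right

lemma compat_of_subset (hC : IsCC G S C) {E : Finset V} (hE : Conn G E) (hES : E ⊆ S) :
    Compat G E C := by
  by_cases hEC : Orth G E C
  · exact Or.inr (Or.inr hEC)
  · simp only [Orth, not_forall, not_not] at hEC
    obtain ⟨a, haE, b, hbC, hab⟩ := hEC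
    exact Or.inl (hC.subset_of_adj hE hES haE hbC hab)

end IsCC

section iN
variable {V : Type*} [DecidableEq V] {H : Finset (Finset V)} {B C : Finset V} {v : V}

lemma mem_iN : v ∈ iN H B ↔ ∃ C ∈ H, C ⊂ B ∧ v ∈ C := by
  simp only [iN, Finset.mem_sup, Finset.mem_filter, id, and_assoc]

lemma subset_iN (hC : C ∈ H) (hCB : C ⊂ B) : C ⊆ iN H B :=
  fun _ hv => mem_iN.mpr ⟨C, hC, hCB, hv⟩

lemma iN_subset : iN H B ⊆ B := fun _ hv => by
  obtain ⟨C, -, hCB, hvC⟩ := mem_iN.mp hv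
  exact hCB.subset hvC

end iN

namespace Nested
variable {V : Type*} [Fintype V] [DecidableEq V] {G : SimpleGraph V} {H : Finset (Finset V)}

lemma insert (hH : Nested G H) {B : Finset V} (hB : Conn G B) (hBH : ∀ E ∈ H, Compat G E B) :
    Nested G (insert B H) := by
  refine ⟨Finset.mem_insert_of_mem hH.1, ?_, ?_⟩
  · simpa only [Finset.forall_mem_insert] using ⟨hB, hH.2.1⟩
  · simp only [Finset.forall_mem_insert]
    exact ⟨⟨Or.inl subset_rfl, fun E hE => (hBH E hE).symm⟩,
      fun E hE => ⟨hBH E hE, hH.2.2 E hE⟩⟩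

lemma sdiff_iN_nonempty (hH : Nested G H) {B : Finset V} (hB : B ∈ H) :
    (B \ iN H B).Nonempty := by
  by_contra hcover
  rw [Finset.not_nonempty_iff_eq_empty, Finset.sdiff_eq_empty_iff_subset] at hcover
  obtain ⟨x, hxB⟩ := (hH.2.1 B hB).nonempty
  obtain ⟨C₀, hC₀⟩ : ∃ C₀, C₀ ∈ H.filter fun C => C ⊂ B ∧ x ∈ C := by
    simpa only [Finset.mem_filter, and_assoc] using mem_iN.mp (hcover hxB)
  obtain ⟨C, -, ⟨hC, hCmax⟩⟩ := Finset.exists_le_maximal _ hC₀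
  simp only [Finset.mem_filter] at hC hCmax
  obtain ⟨hCH, hCB, hxC⟩ := hC
  -- an edge from `C` to `B \ C` lands in a member below `B` incompatible with the maximal `C`
  obtain ⟨t, htB, htC⟩ := Finset.exists_of_ssubset hCB
  obtain ⟨a, haC, b, hbB, hbC, hab⟩ := (hH.2.1 B hB).exists_adj_sdiff hxC (hCB.subset hxC) htB htC
  obtain ⟨C', hC'H, hC'B, hbC'⟩ := mem_iN.mp (hcover hbB)
  rcases hH.2.2 C hCH C' hC'H with hCC' | hC'C | hCC'
  · exact hbC (hCmax ⟨hC'H, hC'B, hCC' hxC⟩ hCC' hbC')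
  · exact hbC (hC'C hbC')
  · exact hCC' a haC b hbC' hab

lemma exists_mem_sdiff_iN (hH : Nested G H) (v : V) : ∃ B ∈ H, v ∈ B \ iN H B := by
  obtain ⟨B, -, ⟨hB, hBmin⟩⟩ := (H.filter (v ∈ ·)).exists_le_minimal
    (Finset.mem_filter.mpr ⟨hH.1, Finset.mem_univ v⟩)
  simp only [Finset.mem_filter] at hB hBmin
  refine ⟨B, hB.1, Finset.mem_sdiff.mpr ⟨hB.2, fun hv => ?_⟩⟩
  obtain ⟨C, hCH, hCB, hvC⟩ := mem_iN.mp hv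
  exact hCB.not_subset (hBmin ⟨hCH, hvC⟩ hCB.subset)

lemma pairwiseDisjoint_sdiff_iN (hH : Nested G H) :
    (H : Set (Finset V)).PairwiseDisjoint fun B => B \ iN H B := by
  intro B hB C hC hBC
  refine Finset.disjoint_left.mpr fun v hvB hvC => ?_
  rw [Finset.mem_sdiff] at hvB hvC
  rcases (hH.2.2 B hB C hC).subset_or_subset (hH.2.1 B hB) hvB.1 hvC.1 with hBC' | hCB'
  · exact hvC.2 (mem_iN.mpr ⟨B, hB, hBC'.ssubset_of_ne hBC, hvB.1⟩)
  · exact hvB.2 (mem_iN.mpr ⟨C, hC, hCB'.ssubset_of_ne hBC.symm, hvC.1⟩)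

lemma sum_nN (hH : Nested G H) : ∑ B ∈ H, nN H B = Fintype.card V := by
  have hcover : H.biUnion (fun B => B \ iN H B) = Finset.univ :=
    Finset.eq_univ_of_forall fun v => Finset.mem_biUnion.mpr (hH.exists_mem_sdiff_iN v)
  rw [← Finset.card_univ, ← hcover, Finset.card_biUnion hH.pairwiseDisjoint_sdiff_iN]
  rfl

end Nested

namespace MaxNested
variable {V : Type*} [Fintype V] [DecidableEq V] {G : SimpleGraph V} {F : Finset (Finset V)}

lemma mem_of_compat (hF : MaxNested G F) {B : Finset V} (hB : Conn G B)
    (hBF : ∀ E ∈ F, Compat G E B) : B ∈ F :=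
  hF.2 _ (hF.1.insert hB hBF) (Finset.subset_insert B F) ▸ Finset.mem_insert_self B F

lemma nN_eq_one (hF : MaxNested G F) {B : Finset V} (hB : B ∈ F) : nN F B = 1 := by
  obtain ⟨x, hx⟩ := hF.1.sdiff_iN_nonempty hB
  rw [nN, Finset.card_eq_one]
  refine ⟨x, Finset.eq_singleton_iff_unique_mem.mpr ⟨hx, fun y hy => ?_⟩⟩
  by_contra hyx
  rw [Finset.mem_sdiff] at hx hy
  -- the component of `x` in `insert x (iN F B)` would be a new element of `F`
  set A := insert x (iN F B)
  have hAB : A ⊆ B := Finset.insert_subset hx.1 iN_subset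
  have hyA : y ∉ A := by simp [A, hyx, hy.2]
  obtain ⟨B', hB', hxB'⟩ := IsCC.exists_mem (G := G) (Finset.mem_insert_self x (iN F B))
  have hB'B : B' ⊂ B :=
    (hB'.1.trans hAB).ssubset_of_ne fun h => hyA (hB'.1 (h ▸ hy.1))
  have hcompat : ∀ E ∈ F, Compat G E B' := by
    intro E hE
    rcases hF.1.2.2 E hE B hB with hEB | hBE | hEB
    · rcases eq_or_ne E B with rfl | hne
      · exact Or.inr (Or.inl hB'B.subset)
      · exact hB'.compat_of_subset (hF.1.2.1 E hE)
          ((subset_iN hE (hEB.ssubset_of_ne hne)).trans (Finset.subset_insert x _))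
    · exact Or.inr (Or.inl (hB'B.subset.trans hBE))
    · exact Or.inr (Or.inr fun a ha b hb => hEB a ha b (hB'B.subset hb))
  exact hx.2 (subset_iN (hF.mem_of_compat hB'.2.1 hcompat) hB'B hxB')

end MaxNested

theorem stmt1_general {V : Type*} [Fintype V] [DecidableEq V]
    (G : SimpleGraph V)
    (F : Finset (Finset V)) (hF : MaxNested G F) :
    (∀ B ∈ F, nN F B = 1) ∧ F.card = Fintype.card V := by
  have hone : ∀ B ∈ F, nN F B = 1 := fun B hB => hF.nN_eq_one hB
  refine ⟨hone, ?_⟩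
  rw [← hF.1.sum_nN, Finset.sum_congr rfl hone, Finset.card_eq_sum_ones]

/-- For a maximal nested set `F` on a connected diagram `D`,
`n(B;F) = 1` for every `B ∈ F`, and consequently `|F| = |V(D)|`. -/
theorem stmt1 {V : Type*} [Fintype V] [DecidableEq V]
    (G : SimpleGraph V) (hG : G.Connected)
    (F : Finset (Finset V)) (hF : MaxNested G F) :
    (∀ B ∈ F, nN F B = 1) ∧ F.card = Fintype.card V :=
  stmt1_general G F hF
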